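/- Let |Ψ⟩ be an n-qudit pure state (n ≥ 2) and Ω_SD the verification operator of the SD protocol with uniform probability 2^{1−n} over all 2^{n−1} tests. Then Ω_SD ≤ (1 − 2^{1−n})·1 + 2^{1−n}|Ψ⟩⟨Ψ|, i.e., the spectral gap satisfies ν(Ω_SD) ≥ 2^{1−n}. -/

import Mathlib

open scoped ComplexOrder Classical
open Matrix

/-- The outer product `|v⟩⟨v|`. -/
noncomputable def ketbra {α : Type*} (v : α → ℂ) : Matrix α α ℂ := Matrix.vecMulVec v (star v)

/-- Tensor product of a one-qudit operator with an `n`-qudit operator, giving an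
`(n+1)`-qudit operator. -/
def tensM {d n : ℕ} (M : Matrix (Fin d) (Fin d) ℂ)
    (N : Matrix (Fin n → Fin d) (Fin n → Fin d) ℂ) :
    Matrix (Fin (n + 1) → Fin d) (Fin (n + 1) → Fin d) ℂ :=
  fun f g => M (f 0) (g 0) * N (fun k => f k.succ) (fun k => g k.succ)

/-- The Fourier basis associated with a basis `a` of `ℂ^d`. -/
noncomputable def fourierB (d : ℕ) (a : Fin d → Fin d → ℂ) (i : Fin d) : Fin d → ℂ :=
  ((Real.sqrt d : ℂ))⁻¹ •
    ∑ j : Fin d, Complex.exp (2 * Real.pi * Complex.I / d) ^ ((i : ℕ) * (j : ℕ)) • a j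

/-- `IsSDOp d n Ψ Ω` says that `Ω` is the verification operator of the SD protocol with
uniform probability for the `n`-qudit state `Ψ`: recursively, the first party measures in
the Schmidt basis of the cut `1|2…n` or its Fourier basis, each with probability `1/2`,
and the SD protocol is applied to the conditional reduced states; the last party projects
onto its conditional reduced state. -/
inductive IsSDOp (d : ℕ) : (n : ℕ) → ((Fin n → Fin d) → ℂ) →
    Matrix (Fin n → Fin d) (Fin n → Fin d) ℂ → Prop
  | base (ψ : (Fin 1 → Fin d) → ℂ) : IsSDOp d 1 ψ (ketbra ψ)
  | step {n : ℕ} (s : Fin d → ℝ) (a : Fin d → Fin d → ℂ)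
      (B Bt : Fin d → (Fin n → Fin d) → ℂ)
      (Ω Ωt : Fin d → Matrix (Fin n → Fin d) (Fin n → Fin d) ℂ)
      (Ψ : (Fin (n + 1) → Fin d) → ℂ)
      (hs0 : ∀ i, 0 ≤ s i) (hs1 : ∑ i, s i ^ 2 = 1)
      (haON : ∀ i j, dotProduct (star (a i)) (a j) = if i = j then 1 else 0)
      (hBON : ∀ i j, dotProduct (star (B i)) (B j) = if i = j then 1 else 0)
      (hΨ : Ψ = fun f => ∑ i : Fin d, (s i : ℂ) * a i (f 0) * B i (fun k => f k.succ))
      (hBt : ∀ i, Bt i = fun y => ∑ j : Fin d,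
        (star (Complex.exp (2 * Real.pi * Complex.I / d))) ^ ((i : ℕ) * (j : ℕ)) *
          (s j : ℂ) * B j y)
      (hrec : ∀ i, 0 < s i → IsSDOp d n (B i) (Ω i))
      (hrect : ∀ i, IsSDOp d n (Bt i) (Ωt i)) :
      IsSDOp d (n + 1) Ψ
        ((2 : ℂ)⁻¹ • (∑ i ∈ Finset.univ.filter (fun i => 0 < s i),
            tensM (ketbra (a i)) (Ω i)) +
         (2 : ℂ)⁻¹ • ∑ i : Fin d, tensM (ketbra (fourierB d a i)) (Ωt i))

/-!
By induction along `IsSDOp` we prove `Ω ≤ (1 - c) • 1 + c • |Ψ⟩⟨Ψ|` with `c = 2^{1-n}`.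
In the recursion step each of the two halves of the protocol (measuring the first party in
the Schmidt basis `a i` or in its Fourier basis) inherits the bound with constant `2c` from the
conditional states, relative to the projection `P` (resp. `Q`) onto the span of the vectors
`a i ⊗ B i` (resp. `fourierB d a j ⊗ Bt j`). Averaging the halves halves the constant and leaves
the remainder `c • (1 + |Ψ⟩⟨Ψ| - P - Q)`. This is positive because `P * Q = Q * P = |Ψ⟩⟨Ψ|`,
so that it is the projection `(1 - P) * (1 - Q)`; the identity `P * Q = |Ψ⟩⟨Ψ|` comes from
`⟨a i ⊗ B i, fourierB d a j ⊗ Bt j⟩ = s i / √d` and the orthogonality of the characters of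
`ℤ/dℤ`.
-/

open scoped Kronecker

section Ketbra

variable {α ι : Type*} [Fintype α]

def IsOrthonormalFamily [DecidableEq ι] (u : ι → α → ℂ) : Prop :=
  ∀ i j, star (u i) ⬝ᵥ u j = if i = j then 1 else 0

lemma ketbra_posSemidef (v : α → ℂ) : (ketbra v).PosSemidef :=
  posSemidef_vecMulVec_self_star v

lemma ketbra_mul_ketbra (v w : α → ℂ) :
    ketbra v * ketbra w = (star v ⬝ᵥ w) • vecMulVec v (star w) := by
  rw [ketbra, ketbra, vecMulVec_mul_vecMulVec, vecMulVec_smul]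

lemma sum_ketbra_mul_sum_ketbra {κ : Type*} (s : Finset ι) (t : Finset κ)
    (u : ι → α → ℂ) (v : κ → α → ℂ) (x : ι → ℂ) (y : κ → ℂ)
    (h : ∀ i ∈ s, ∀ j ∈ t, star (u i) ⬝ᵥ v j = x i * star (y j)) :
    (∑ i ∈ s, ketbra (u i)) * (∑ j ∈ t, ketbra (v j)) =
      vecMulVec (∑ i ∈ s, x i • u i) (star (∑ j ∈ t, y j • v j)) := by
  rw [Finset.sum_mul_sum]
  ext a b
  simp only [Matrix.sum_apply, ketbra_mul_ketbra, Matrix.smul_apply, vecMulVec_apply,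
    Finset.sum_apply, star_sum, Pi.star_apply, Pi.smul_apply, smul_eq_mul, star_mul',
    Finset.sum_mul_sum]
  refine Finset.sum_congr rfl fun i hi => Finset.sum_congr rfl fun j hj => ?_
  rw [h i hi j hj]
  ring

lemma IsOrthonormalFamily.isStarProjection_sum_ketbra [DecidableEq ι] {u : ι → α → ℂ}
    (hu : IsOrthonormalFamily u) (s : Finset ι) : IsStarProjection (∑ i ∈ s, ketbra (u i)) where
  isIdempotentElem := by
    rw [IsIdempotentElem, Finset.sum_mul_sum]
    refine Finset.sum_congr rfl fun i hi => ?_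
    simp only [ketbra_mul_ketbra, hu i, ite_smul, one_smul, zero_smul, Finset.sum_ite_eq, hi,
      if_true]
    rfl
  isSelfAdjoint := isSelfAdjoint_sum s fun i _ => (ketbra_posSemidef (u i)).isHermitian

lemma IsOrthonormalFamily.dotProduct_sum_smul [Fintype ι] [DecidableEq ι] {u : ι → α → ℂ}
    (hu : IsOrthonormalFamily u) (i : ι) (y : ι → ℂ) :
    star (u i) ⬝ᵥ ∑ j, y j • u j = y i := by
  simp [dotProduct_sum, dotProduct_smul, hu i]

lemma IsOrthonormalFamily.sum_smul_dotProduct_sum_smul [Fintype ι] [DecidableEq ι]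
    {u : ι → α → ℂ} (hu : IsOrthonormalFamily u) (x y : ι → ℂ) :
    star (∑ i, x i • u i) ⬝ᵥ ∑ j, y j • u j = ∑ i, star (x i) * y i := by
  simp [star_sum, sum_dotProduct, smul_dotProduct, hu.dotProduct_sum_smul]

end Ketbra

section StarProjection

variable {α : Type*} [Fintype α]

lemma IsStarProjection.posSemidef {P : Matrix α α ℂ} (hP : IsStarProjection P) :
    P.PosSemidef := by
  have h := posSemidef_conjTranspose_mul_self P
  rwa [← star_eq_conjTranspose, hP.isSelfAdjoint.star_eq, hP.isIdempotentElem.eq] at h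

lemma posSemidef_one_add_sub_sub [DecidableEq α] {P Q R : Matrix α α ℂ}
    (hP : IsStarProjection P) (hQ : IsStarProjection Q) (hPQ : P * Q = R) (hQP : Q * P = R) :
    (1 + R - P - Q).PosSemidef := by
  have hcomm : Commute (1 - P) (1 - Q) := by
    simp only [Commute, SemiconjBy, sub_mul, mul_sub, one_mul, mul_one, hPQ, hQP]
    abel
  convert (hP.one_sub.mul hQ.one_sub hcomm).posSemidef using 1
  rw [sub_mul, mul_sub, mul_sub, one_mul, one_mul, mul_one, hPQ]
  abel

end StarProjection

section Tensor

variable {d n : ℕ}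

def tensV (a : Fin d → ℂ) (B : (Fin n → Fin d) → ℂ) : (Fin (n + 1) → Fin d) → ℂ :=
  fun f => a (f 0) * B (fun k => f k.succ)

lemma tensM_eq_submatrix_kronecker (M : Matrix (Fin d) (Fin d) ℂ)
    (N : Matrix (Fin n → Fin d) (Fin n → Fin d) ℂ) :
    tensM M N = (M ⊗ₖ N).submatrix (Fin.consEquiv fun _ => Fin d).symm
      (Fin.consEquiv fun _ => Fin d).symm :=
  rfl

lemma Matrix.PosSemidef.tensM {M : Matrix (Fin d) (Fin d) ℂ}
    {N : Matrix (Fin n → Fin d) (Fin n → Fin d) ℂ} (hM : M.PosSemidef) (hN : N.PosSemidef) :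
    (tensM M N).PosSemidef := by
  rw [tensM_eq_submatrix_kronecker]
  exact (hM.kronecker hN).submatrix _

lemma tensM_one_one : tensM (1 : Matrix (Fin d) (Fin d) ℂ)
    (1 : Matrix (Fin n → Fin d) (Fin n → Fin d) ℂ) = 1 := by
  rw [tensM_eq_submatrix_kronecker, one_kronecker_one, submatrix_one_equiv]

lemma tensM_sub_left (M M' : Matrix (Fin d) (Fin d) ℂ)
    (N : Matrix (Fin n → Fin d) (Fin n → Fin d) ℂ) :
    tensM (M - M') N = tensM M N - tensM M' N := by
  ext f g
  simp [tensM, sub_mul]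

lemma sum_tensM_left {ι : Type*} (s : Finset ι) (M : ι → Matrix (Fin d) (Fin d) ℂ)
    (N : Matrix (Fin n → Fin d) (Fin n → Fin d) ℂ) :
    ∑ i ∈ s, tensM (M i) N = tensM (∑ i ∈ s, M i) N := by
  ext f g
  simp [tensM, Matrix.sum_apply, Finset.sum_mul]

lemma tensM_add (M : Matrix (Fin d) (Fin d) ℂ)
    (N N' : Matrix (Fin n → Fin d) (Fin n → Fin d) ℂ) :
    tensM M (N + N') = tensM M N + tensM M N' := by
  ext f g
  simp [tensM, mul_add]

lemma tensM_sub (M : Matrix (Fin d) (Fin d) ℂ)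
    (N N' : Matrix (Fin n → Fin d) (Fin n → Fin d) ℂ) :
    tensM M (N - N') = tensM M N - tensM M N' := by
  ext f g
  simp [tensM, mul_sub]

lemma tensM_smul (M : Matrix (Fin d) (Fin d) ℂ) (c : ℂ)
    (N : Matrix (Fin n → Fin d) (Fin n → Fin d) ℂ) :
    tensM M (c • N) = c • tensM M N := by
  ext f g
  simp only [tensM, Matrix.smul_apply, smul_eq_mul]
  ring

lemma tensM_ketbra_ketbra (a : Fin d → ℂ) (B : (Fin n → Fin d) → ℂ) :
    tensM (ketbra a) (ketbra B) = ketbra (tensV a B) := by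
  ext f g
  simp only [tensM, ketbra, tensV, vecMulVec_apply, Pi.star_apply, star_mul']
  ring

lemma dotProduct_tensV (a a' : Fin d → ℂ) (B B' : (Fin n → Fin d) → ℂ) :
    star (tensV a B) ⬝ᵥ tensV a' B' = (star a ⬝ᵥ a') * (star B ⬝ᵥ B') := by
  rw [dotProduct, ← (Fin.consEquiv fun _ => Fin d).sum_comp, Fintype.sum_prod_type,
    dotProduct, dotProduct, Finset.sum_mul_sum]
  simp only [Fin.consEquiv_apply, tensV, Pi.star_apply, Fin.cons_zero, Fin.cons_succ,
    star_mul']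
  refine Finset.sum_congr rfl fun i _ => Finset.sum_congr rfl fun f _ => ?_
  ring

lemma IsOrthonormalFamily.tensV {ι : Type*} [DecidableEq ι] {a : ι → Fin d → ℂ}
    {B : ι → (Fin n → Fin d) → ℂ} (ha : IsOrthonormalFamily a) (hB : IsOrthonormalFamily B) :
    IsOrthonormalFamily fun i => tensV (a i) (B i) := by
  intro i j
  rw [dotProduct_tensV, ha, hB]
  split_ifs <;> simp

end Tensor

/-- `GapBound c K Ω` is the Loewner-order bound `Ω ≤ (1 - c) • 1 + c • K`; for `K = ketbra Ψ`
it says that the spectral gap of `Ω` is at least `c`. -/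
def GapBound {α : Type*} [Fintype α] [DecidableEq α] (c : ℂ) (K Ω : Matrix α α ℂ) : Prop :=
  ((1 - c) • 1 + c • K - Ω).PosSemidef

lemma GapBound.half_add_half {α : Type*} [Fintype α] [DecidableEq α] {c : ℂ} (hc : 0 ≤ c)
    {P Q R M₁ M₂ : Matrix α α ℂ} (h₁ : GapBound c P M₁) (h₂ : GapBound c Q M₂)
    (hR : (1 + R - P - Q).PosSemidef) :
    GapBound (2⁻¹ * c) R ((2 : ℂ)⁻¹ • M₁ + (2 : ℂ)⁻¹ • M₂) := by
  have half_nonneg : (0 : ℂ) ≤ 2⁻¹ := by positivity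
  have h : (1 - 2⁻¹ * c) • 1 + (2⁻¹ * c) • R - ((2 : ℂ)⁻¹ • M₁ + (2 : ℂ)⁻¹ • M₂) =
      (2⁻¹ : ℂ) • ((1 - c) • 1 + c • P - M₁) + (2⁻¹ : ℂ) • ((1 - c) • 1 + c • Q - M₂) +
        (2⁻¹ * c) • (1 + R - P - Q) := by
    module
  rw [GapBound, h]
  exact ((h₁.smul half_nonneg).add (h₂.smul half_nonneg)).add
    (hR.smul (mul_nonneg half_nonneg hc))

lemma GapBound.sum_tensM {d n : ℕ} {ι : Type*} {c : ℂ} (hc : 0 ≤ 1 - c) (S : Finset ι)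
    {A : ι → Matrix (Fin d) (Fin d) ℂ} {K Ω : ι → Matrix (Fin n → Fin d) (Fin n → Fin d) ℂ}
    (hA : ∀ i ∈ S, (A i).PosSemidef) (hA1 : (1 - ∑ i ∈ S, A i).PosSemidef)
    (hΩ : ∀ i ∈ S, GapBound c (K i) (Ω i)) :
    GapBound c (∑ i ∈ S, tensM (A i) (K i)) (∑ i ∈ S, tensM (A i) (Ω i)) := by
  have h : (1 - c) • 1 + c • ∑ i ∈ S, tensM (A i) (K i) - ∑ i ∈ S, tensM (A i) (Ω i) =
      (1 - c) • tensM (1 - ∑ i ∈ S, A i) 1 +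
        ∑ i ∈ S, tensM (A i) ((1 - c) • 1 + c • K i - Ω i) := by
    rw [tensM_sub_left, tensM_one_one, ← sum_tensM_left]
    simp only [tensM_sub, tensM_add, tensM_smul, Finset.sum_sub_distrib, Finset.sum_add_distrib,
      ← Finset.smul_sum]
    module
  rw [GapBound, h]
  exact ((hA1.tensM .one).smul hc).add
    (posSemidef_sum S fun i hi => (hA i hi).tensM (hΩ i hi))

lemma IsPrimitiveRoot.star_eq_inv {ζ : ℂ} {d : ℕ} (hζ : IsPrimitiveRoot ζ d) (hd : d ≠ 0) :
    star ζ = ζ⁻¹ :=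
  (Complex.inv_eq_conj (hζ.norm'_eq_one hd)).symm

lemma IsPrimitiveRoot.sum_pow_mul_star_pow {ζ : ℂ} {d : ℕ} (hζ : IsPrimitiveRoot ζ d)
    (k l : Fin d) :
    ∑ j : Fin d, ζ ^ ((j : ℕ) * k) * star ζ ^ ((j : ℕ) * l) = if k = l then (d : ℂ) else 0 := by
  have hd : d ≠ 0 := k.pos.ne'
  have hζ0 : ζ ≠ 0 := hζ.ne_zero hd
  set η := ζ ^ (k : ℕ) * (ζ ^ (l : ℕ))⁻¹ with hη
  have hterm : ∀ j : ℕ, ζ ^ (j * k) * star ζ ^ (j * l) = η ^ j := by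
    intro j
    rw [hζ.star_eq_inv hd, hη, mul_pow, inv_pow, inv_pow, ← pow_mul, ← pow_mul, mul_comm j,
      mul_comm j]
  simp only [hterm]
  rw [Fin.sum_univ_eq_sum_range (η ^ ·)]
  split_ifs with hkl
  · simp [hη, hkl, hζ0]
  · have hη1 : η ≠ 1 := fun h => hkl <| Fin.ext <| hζ.pow_inj k.isLt l.isLt <|
      by rwa [hη, mul_inv_eq_one₀ (pow_ne_zero _ hζ0)] at h
    have hηd : η ^ d = 1 := by
      rw [hη, mul_pow, inv_pow, ← pow_mul, ← pow_mul, mul_comm (k : ℕ), mul_comm (l : ℕ),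
        pow_mul, pow_mul, hζ.pow_eq_one, one_pow, one_pow, inv_one, mul_one]
    have h := geom_sum_mul η d
    rw [hηd, sub_self] at h
    exact (mul_eq_zero.mp h).resolve_right (sub_ne_zero.mpr hη1)

lemma IsPrimitiveRoot.pow_mul_star_pow {ζ : ℂ} {d : ℕ} (hζ : IsPrimitiveRoot ζ d) (hd : d ≠ 0)
    (m : ℕ) : ζ ^ m * star ζ ^ m = 1 := by
  rw [← mul_pow, hζ.star_eq_inv hd, mul_inv_cancel₀ (hζ.ne_zero hd), one_pow]

section Protocol

variable {d n : ℕ} {s : Fin d → ℝ} {a : Fin d → Fin d → ℂ}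
  {B : Fin d → (Fin n → Fin d) → ℂ} {Ψ : (Fin (n + 1) → Fin d) → ℂ}

local notation "ω" => Complex.exp (2 * Real.pi * Complex.I / d)
local notation "r" => ((Real.sqrt d : ℂ))⁻¹

lemma inv_sqrt_mul_inv_sqrt : r * r = (d : ℂ)⁻¹ := by
  rw [← mul_inv, ← Complex.ofReal_mul, Real.mul_self_sqrt d.cast_nonneg, Complex.ofReal_natCast]

lemma fourierB_eq_sum_smul (i : Fin d) :
    fourierB d a i = ∑ j : Fin d, (r * ω ^ ((i : ℕ) * j)) • a j := by
  simp only [fourierB, Finset.smul_sum, smul_smul]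

lemma isOrthonormalFamily_fourierB (hd : 0 < d) (ha : IsOrthonormalFamily a) :
    IsOrthonormalFamily (fourierB d a) := by
  intro i j
  have hω : IsPrimitiveRoot ω d := Complex.isPrimitiveRoot_exp d hd.ne'
  have hr : star r = r := by simp
  calc star (fourierB d a i) ⬝ᵥ fourierB d a j
      = r * r * ∑ k : Fin d, ω ^ ((k : ℕ) * j) * star ω ^ ((k : ℕ) * i) := by
        rw [fourierB_eq_sum_smul, fourierB_eq_sum_smul, ha.sum_smul_dotProduct_sum_smul,
          Finset.mul_sum]
        refine Finset.sum_congr rfl fun k _ => ?_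
        rw [star_mul', hr, star_pow, mul_comm (i : ℕ), mul_comm (j : ℕ)]
        ring
    _ = if i = j then 1 else 0 := by
        rw [hω.sum_pow_mul_star_pow, inv_sqrt_mul_inv_sqrt]
        rcases eq_or_ne i j with rfl | hij
        · simp [hd.ne']
        · simp [hij, hij.symm]

noncomputable def fourierState (s : Fin d → ℝ) (B : Fin d → (Fin n → Fin d) → ℂ) (i : Fin d) :
    (Fin n → Fin d) → ℂ :=
  ∑ j : Fin d, (star ω ^ ((i : ℕ) * j) * s j) • B j

lemma dotProduct_fourierState (hB : IsOrthonormalFamily B) (i j : Fin d) :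
    star (B i) ⬝ᵥ fourierState s B j = star ω ^ ((j : ℕ) * i) * s i :=
  hB.dotProduct_sum_smul i _

lemma fourierState_dotProduct_self (hd : 0 < d) (hB : IsOrthonormalFamily B)
    (hs : ∑ i, s i ^ 2 = 1) (i : Fin d) :
    star (fourierState s B i) ⬝ᵥ fourierState s B i = 1 := by
  have hω : IsPrimitiveRoot ω d := Complex.isPrimitiveRoot_exp d hd.ne'
  calc star (fourierState s B i) ⬝ᵥ fourierState s B i = ∑ k, ((s k ^ 2 : ℝ) : ℂ) := by
        rw [fourierState, hB.sum_smul_dotProduct_sum_smul]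
        refine Finset.sum_congr rfl fun k _ => ?_
        rw [star_mul', star_pow, star_star,
          show star (s k : ℂ) = s k from Complex.conj_ofReal _]
        push_cast
        linear_combination (s k : ℂ) ^ 2 * hω.pow_mul_star_pow hd.ne' ((i : ℕ) * k)
    _ = 1 := by exact_mod_cast hs

lemma sum_smul_tensV_fourierB_fourierState (hd : 0 < d) :
    ∑ j, r • tensV (fourierB d a j) (fourierState s B j) =
      ∑ i, (s i : ℂ) • tensV (a i) (B i) := by
  have hω : IsPrimitiveRoot ω d := Complex.isPrimitiveRoot_exp d hd.ne'
  ext f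
  calc (∑ j, r • tensV (fourierB d a j) (fourierState s B j)) f
      = ∑ k : Fin d, ∑ l : Fin d,
          (r * r * ∑ j : Fin d, ω ^ ((j : ℕ) * l) * star ω ^ ((j : ℕ) * k)) *
            (s k * (a l (f 0) * B k fun m => f m.succ)) := by
        simp only [Finset.sum_apply, Pi.smul_apply, tensV, fourierB_eq_sum_smul, fourierState,
          smul_eq_mul, Finset.mul_sum, Finset.sum_mul]
        rw [Finset.sum_comm]
        refine Finset.sum_congr rfl fun k _ => ?_
        rw [Finset.sum_comm]
        refine Finset.sum_congr rfl fun l _ => Finset.sum_congr rfl fun j _ => ?_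
        ring
    _ = (∑ i, (s i : ℂ) • tensV (a i) (B i)) f := by
        simp only [hω.sum_pow_mul_star_pow, inv_sqrt_mul_inv_sqrt]
        simp [hd.ne', tensV, Finset.sum_apply]

lemma dotProduct_tensV_fourierB_fourierState (hd : 0 < d) (ha : IsOrthonormalFamily a)
    (hB : IsOrthonormalFamily B) (i j : Fin d) :
    star (tensV (a i) (B i)) ⬝ᵥ tensV (fourierB d a j) (fourierState s B j) = s i * star r := by
  have hω : IsPrimitiveRoot ω d := Complex.isPrimitiveRoot_exp d hd.ne'
  rw [dotProduct_tensV, fourierB_eq_sum_smul, ha.dotProduct_sum_smul, dotProduct_fourierState hB,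
    show star r = r by simp]
  linear_combination (r * s i) * hω.pow_mul_star_pow hd.ne' ((j : ℕ) * i)

lemma isOrthonormalFamily_tensV_fourierB_fourierState (hd : 0 < d) (ha : IsOrthonormalFamily a)
    (hB : IsOrthonormalFamily B) (hs : ∑ i, s i ^ 2 = 1) :
    IsOrthonormalFamily fun j => tensV (fourierB d a j) (fourierState s B j) := by
  intro i j
  rw [dotProduct_tensV, isOrthonormalFamily_fourierB hd ha]
  rcases eq_or_ne i j with rfl | hij
  · simp [fourierState_dotProduct_self hd hB hs]
  · simp [hij]

lemma posSemidef_one_add_ketbra_sub_sub (hd : 0 < d) (ha : IsOrthonormalFamily a)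
    (hB : IsOrthonormalFamily B) (hs0 : ∀ i, 0 ≤ s i) (hs1 : ∑ i, s i ^ 2 = 1)
    (hΨ : Ψ = ∑ i, (s i : ℂ) • tensV (a i) (B i)) :
    (1 + ketbra Ψ -
      ∑ i ∈ Finset.univ.filter (fun i => 0 < s i), tensM (ketbra (a i)) (ketbra (B i)) -
      ∑ j, tensM (ketbra (fourierB d a j)) (ketbra (fourierState s B j))).PosSemidef := by
  simp only [tensM_ketbra_ketbra]
  have hu := ha.tensV hB
  have hv := isOrthonormalFamily_tensV_fourierB_fourierState hd ha hB hs1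
  have hΨS :
      ∑ i ∈ Finset.univ.filter (fun i => 0 < s i), (s i : ℂ) • tensV (a i) (B i) = Ψ := by
    rw [hΨ]
    refine Finset.sum_filter_of_ne fun i _ hi => (hs0 i).lt_of_ne' fun h0 => hi ?_
    simp [h0]
  have hPQ : (∑ i ∈ Finset.univ.filter (fun i => 0 < s i), ketbra (tensV (a i) (B i))) *
      (∑ j, ketbra (tensV (fourierB d a j) (fourierState s B j))) = ketbra Ψ := by
    rw [sum_ketbra_mul_sum_ketbra _ _ _ _ (fun i => (s i : ℂ)) (fun _ => r)
      (fun i _ j _ => dotProduct_tensV_fourierB_fourierState hd ha hB i j), hΨS,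
      sum_smul_tensV_fourierB_fourierState hd, ← hΨ]
    rfl
  refine posSemidef_one_add_sub_sub (hu.isStarProjection_sum_ketbra _)
    (hv.isStarProjection_sum_ketbra _) hPQ ?_
  simpa [(hu.isStarProjection_sum_ketbra _).isSelfAdjoint.star_eq,
    (hv.isStarProjection_sum_ketbra _).isSelfAdjoint.star_eq,
    (ketbra_posSemidef Ψ).isHermitian.star_eq] using congrArg star hPQ

end Protocol

lemma IsSDOp.pos {d n : ℕ} {Ψ : (Fin n → Fin d) → ℂ}
    {Ω : Matrix (Fin n → Fin d) (Fin n → Fin d) ℂ} (h : IsSDOp d n Ψ Ω) : 0 < n := by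
  cases h <;> omega

lemma IsSDOp.gapBound {d n : ℕ} (hd : 0 < d) {Ψ : (Fin n → Fin d) → ℂ}
    {Ω : Matrix (Fin n → Fin d) (Fin n → Fin d) ℂ} (h : IsSDOp d n Ψ Ω) :
    GapBound ((2 ^ (n - 1))⁻¹) (ketbra Ψ) Ω := by
  induction h with
  | base ψ => simpa [GapBound] using PosSemidef.zero
  | @step n s a B Bt Ω Ωt Ψ hs0 hs1 ha hB hΨ hBt _ hrect ih iht =>
    obtain ⟨m, rfl⟩ : ∃ m, n = m + 1 := Nat.exists_eq_add_one.mpr (hrect ⟨0, hd⟩).pos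
    have hΨ' : Ψ = ∑ i, (s i : ℂ) • tensV (a i) (B i) := by
      rw [hΨ]
      ext f
      simp [tensV, Finset.sum_apply, mul_assoc]
    obtain rfl : Bt = fourierState s B := funext fun i => by
      rw [hBt i]
      ext y
      simp [fourierState, Finset.sum_apply]
    have hc : ((2 : ℂ) ^ (m + 1))⁻¹ = 2⁻¹ * (2 ^ m)⁻¹ := by rw [pow_succ, mul_inv, mul_comm]
    have hc1 : (0 : ℂ) ≤ 1 - (2 ^ m)⁻¹ :=
      sub_nonneg.mpr (inv_le_one_of_one_le₀ (one_le_pow₀ (by norm_num)))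
    simp only [Nat.add_sub_cancel] at ih iht ⊢
    rw [hc]
    exact GapBound.half_add_half (by positivity)
      (GapBound.sum_tensM hc1 _ (fun i _ => ketbra_posSemidef _)
        (IsOrthonormalFamily.isStarProjection_sum_ketbra ha _).one_sub.posSemidef
        fun i hi => ih i (Finset.mem_filter.mp hi).2)
      (GapBound.sum_tensM hc1 _ (fun i _ => ketbra_posSemidef _)
        ((isOrthonormalFamily_fourierB hd ha).isStarProjection_sum_ketbra _).one_sub.posSemidef
        fun i _ => iht i)
      (posSemidef_one_add_ketbra_sub_sub hd ha hB hs0 hs1 hΨ')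

theorem stmt9_general (d n : ℕ) (hd : 0 < d)
    (Ψ : (Fin n → Fin d) → ℂ)
    (Ω : Matrix (Fin n → Fin d) (Fin n → Fin d) ℂ) (hΩ : IsSDOp d n Ψ Ω) :
    ((1 - ((2 : ℂ) ^ (n - 1))⁻¹) • (1 : Matrix (Fin n → Fin d) (Fin n → Fin d) ℂ) +
      ((2 : ℂ) ^ (n - 1))⁻¹ • ketbra Ψ - Ω).PosSemidef :=
  hΩ.gapBound hd

/-- Theorem 1: the SD protocol with uniform probability for any `n`-qudit pure state
(`n ≥ 2`) satisfies `Ω_SD ≤ (1 − 2^{1−n})·1 + 2^{1−n}|Ψ⟩⟨Ψ|`, i.e. its spectral gap is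
at least `2^{1−n}`. -/
theorem stmt9 (d n : ℕ) (hd : 0 < d) (hn : 2 ≤ n)
    (Ψ : (Fin n → Fin d) → ℂ) (hΨunit : dotProduct (star Ψ) Ψ = 1)
    (Ω : Matrix (Fin n → Fin d) (Fin n → Fin d) ℂ) (hΩ : IsSDOp d n Ψ Ω) :
    ((1 - ((2 : ℂ) ^ (n - 1))⁻¹) • (1 : Matrix (Fin n → Fin d) (Fin n → Fin d) ℂ) +
      ((2 : ℂ) ^ (n - 1))⁻¹ • ketbra Ψ - Ω).PosSemidef :=
  stmt9_general d n hd Ψ Ω hΩ
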